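/- arXiv:1201.2499 — 3 statements merged into one kernel-verified Lean document; each statement's English description precedes it below -/
import Mathlib

section
/- Let T be a triangulated category, let X and Y be thick subcategories of T, and assume that the subcategory of extensions X * Y is a triangulated subcategory of T. Then the pair (X/(X ∩ Y), Y/(X ∩ Y)) is a stable t-structure in the Verdier quotient (X * Y)/(X ∩ Y). -/
namespace Paper

open CategoryTheory Limits Triangulated Pretriangulated ZeroObject

universe w v u

variable {C : Type u} [Category.{v} C] [HasZeroObject C] [Preadditive C] [HasShift C ℤ]
  [∀ n : ℤ, (shiftFunctor C n).Additive] [Pretriangulated C]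

/-- The subcategory of extensions `X * Y`: objects `e` admitting a distinguished triangle
`x ⟶ e ⟶ y ⟶ x⟦1⟧` with `x ∈ X` and `y ∈ Y`. -/
def star (X Y : Set C) : Set C :=
  {e | ∃ (x y : C) (_ : x ∈ X) (_ : y ∈ Y) (f : x ⟶ e) (g : e ⟶ y) (h : y ⟶ x⟦(1 : ℤ)⟧),
    Triangle.mk f g h ∈ distTriang C}

/-- A (strictly full) triangulated subcategory: a class of objects containing `0`, closed
under isomorphisms, suspension, desuspension and extensions. -/
structure IsTriangulatedSubcat (S : Set C) : Prop where
  zero_mem : (0 : C) ∈ S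
  mem_of_iso : ∀ {a b : C}, (a ≅ b) → a ∈ S → b ∈ S
  shift_mem : ∀ {a : C}, a ∈ S → a⟦(1 : ℤ)⟧ ∈ S
  unshift_mem : ∀ {a : C}, a ∈ S → a⟦(-1 : ℤ)⟧ ∈ S
  ext₂ : ∀ {a e b : C} (f : a ⟶ e) (g : e ⟶ b) (h : b ⟶ a⟦(1 : ℤ)⟧),
    (Triangle.mk f g h ∈ distTriang C) → a ∈ S → b ∈ S → e ∈ S

/-- A thick subcategory: a triangulated subcategory closed under direct summands
(equivalently, retracts). -/
structure IsThickSubcat (S : Set C) extends IsTriangulatedSubcat S : Prop where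
  mem_of_retract : ∀ {a s : C}, s ∈ S → (∃ (i : a ⟶ s) (p : s ⟶ a), i ≫ p = 𝟙 a) → a ∈ S

/-- `(U, V)` is a stable t-structure in the (triangulated sub)category whose class of
objects is `S`: both are triangulated subcategories contained in `S`, `Hom(U, V) = 0`
and `U * V = S`. -/
structure IsStableTStructureIn (S U V : Set C) : Prop where
  subsetU : U ⊆ S
  subsetV : V ⊆ S
  triU : IsTriangulatedSubcat U
  triV : IsTriangulatedSubcat V
  hom_zero : ∀ {u v : C}, u ∈ U → v ∈ V → ∀ f : u ⟶ v, f = 0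
  star_eq : star U V = S

lemma IsTriangulatedSubcat.shift_all {S : Set C} (hS : IsTriangulatedSubcat S) (a : C) (n : ℤ)
    (ha : a ∈ S) : a⟦n⟧ ∈ S := by
  induction n using Int.induction_on with
  | zero => exact hS.mem_of_iso ((shiftFunctorZero C ℤ).app a).symm ha
  | succ i hi =>
      exact hS.mem_of_iso ((shiftFunctorAdd' C (i : ℤ) 1 ((i : ℤ) + 1) rfl).app a).symm
        (hS.shift_mem hi)
  | pred i hi =>
      exact hS.mem_of_iso
        ((shiftFunctorAdd' C (-(i : ℤ)) (-1) (-(i : ℤ) - 1) (by ring)).app a).symm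
        (hS.unshift_mem hi)

/-- The Mathlib `Triangulated.Subcategory` associated to a class of objects satisfying
`IsTriangulatedSubcat`. -/
def IsTriangulatedSubcat.toSubcategory {S : Set C} (hS : IsTriangulatedSubcat S) :
    ObjectProperty C :=
  fun a => a ∈ S

instance IsTriangulatedSubcat.instIsTriangulatedToSubcategory {S : Set C}
    (hS : IsTriangulatedSubcat S) : hS.toSubcategory.IsTriangulated where
  exists_zero := ⟨0, isZero_zero C, hS.zero_mem⟩
  isStableUnderShiftBy n := ⟨fun a ha => hS.shift_all a n ha⟩
  ext₂' T hT h₁ h₃ := ObjectProperty.le_isoClosure _ _ (hS.ext₂ T.mor₁ T.mor₂ T.mor₃ hT h₁ h₃)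

instance IsTriangulatedSubcat.instIsClosedUnderIsoToSubcategory {S : Set C}
    (hS : IsTriangulatedSubcat S) : hS.toSubcategory.IsClosedUnderIsomorphisms where
  of_iso e h := hS.mem_of_iso e h

lemma IsTriangulatedSubcat.inter {X Y : Set C} (hX : IsTriangulatedSubcat X)
    (hY : IsTriangulatedSubcat Y) : IsTriangulatedSubcat (X ∩ Y) where
  zero_mem := ⟨hX.zero_mem, hY.zero_mem⟩
  mem_of_iso := fun e h => ⟨hX.mem_of_iso e h.1, hY.mem_of_iso e h.2⟩
  shift_mem := fun h => ⟨hX.shift_mem h.1, hY.shift_mem h.2⟩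
  unshift_mem := fun h => ⟨hX.unshift_mem h.1, hY.unshift_mem h.2⟩
  ext₂ := fun f g h hT ha hb => ⟨hX.ext₂ f g h hT ha.1 hb.1, hY.ext₂ f g h hT ha.2 hb.2⟩

/-- The Verdier quotient of `C` by the triangulated subcategory `S`. -/
abbrev VerdierQuotient {S : Set C} (hS : IsTriangulatedSubcat S) : Type _ :=
  hS.toSubcategory.trW.Localization

/-- The Verdier quotient functor. -/
noncomputable abbrev Vq {S : Set C} (hS : IsTriangulatedSubcat S) : C ⥤ VerdierQuotient hS :=
  hS.toSubcategory.trW.Q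

/-- The essential image of a class of objects under a functor (the closure under
isomorphisms of the image). -/
def QSet {D : Type*} [Category D] (L : C ⥤ D) (S : Set C) : Set D :=
  {d | ∃ s ∈ S, Nonempty (L.obj s ≅ d)}

/-- The right perpendicular class `X^⊥`. -/
def rightPerp (X : Set C) : Set C := {t | ∀ {x : C}, x ∈ X → ∀ f : x ⟶ t, f = 0}

/-- The left perpendicular class `^⊥X`. -/
def leftPerp (X : Set C) : Set C := {t | ∀ {x : C}, x ∈ X → ∀ f : t ⟶ x, f = 0}

/-!
Write `L : C ⥤ C/(X ∩ Y)` for the quotient functor. A morphism `L a ⟶ L b` is a left fraction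
`a ⟶ b' ⟵ b` whose denominator has its cone in `X ∩ Y`; hence for every triangulated `P ⊇ X ∩ Y`
the fraction stays inside `P`, and the essential image of `P` is a triangulated subcategory of
the quotient. Applied to `X`, `Y` and `X * Y`, and combined with the fact that `L` maps triangles
to triangles, this gives `L(X * Y) = L X * L Y`. For `Hom(L X, L Y) = 0` it suffices that
`L g = 0` for `g : x ⟶ y`: the cone `c` of `g` lies in `X * Y`, say `x₁ ⟶ c ⟶ y₁`, and by the
octahedral axiom the composite `y ⟶ c ⟶ y₁`, which kills `g`, has its cone in `X ∩ Y`.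
-/

lemma subset_star_left {X Y : Set C} (hY : IsTriangulatedSubcat Y) : X ⊆ star X Y :=
  fun x hx => ⟨x, 0, hx, hY.zero_mem, 𝟙 x, 0, 0, contractible_distinguished x⟩

lemma subset_star_right {X Y : Set C} (hX : IsTriangulatedSubcat X) : Y ⊆ star X Y :=
  fun y hy => ⟨0, y, hX.zero_mem, hy, 0, 𝟙 y, 0, contractible_distinguished₁ y⟩

lemma star_mem_of_iso {X Y : Set C} {e e' : C} (i : e ≅ e') (he : e ∈ star X Y) :
    e' ∈ star X Y := by
  obtain ⟨x, y, hx, hy, f, g, h, hT⟩ := he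
  exact ⟨x, y, hx, hy, f ≫ i.hom, i.inv ≫ g, h, isomorphic_distinguished _ hT _
    (Triangle.isoMk _ _ (Iso.refl _) i.symm (Iso.refl _) (by dsimp [Triangle.mk]; simp)
      (by dsimp [Triangle.mk]; simp) (by dsimp [Triangle.mk]; simp))⟩

section QSet

variable {D : Type*} [Category D]

section

omit [HasZeroObject C] [Preadditive C] [HasShift C ℤ] [∀ n : ℤ, (shiftFunctor C n).Additive]
  [Pretriangulated C]

lemma obj_mem_QSet (L : C ⥤ D) {S : Set C} {s : C} (hs : s ∈ S) : L.obj s ∈ QSet L S :=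
  ⟨s, hs, ⟨Iso.refl _⟩⟩

lemma QSet_mono (L : C ⥤ D) {S S' : Set C} (h : S ⊆ S') : QSet L S ⊆ QSet L S' :=
  fun _ ⟨s, hs, i⟩ => ⟨s, h hs, i⟩

lemma QSet_mem_of_iso (L : C ⥤ D) {S : Set C} {d d' : D} (i : d ≅ d') (hd : d ∈ QSet L S) :
    d' ∈ QSet L S :=
  let ⟨s, hs, ⟨j⟩⟩ := hd
  ⟨s, hs, ⟨j ≪≫ i⟩⟩

end

lemma QSet_shift_mem [HasShift D ℤ] (L : C ⥤ D) [L.CommShift ℤ] {S : Set C}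
    (hS : IsTriangulatedSubcat S) (n : ℤ) {d : D} (hd : d ∈ QSet L S) : d⟦n⟧ ∈ QSet L S :=
  let ⟨s, hs, ⟨i⟩⟩ := hd
  ⟨s⟦n⟧, hS.shift_all s n hs, ⟨(L.commShiftIso n).app s ≪≫ (shiftFunctor D n).mapIso i⟩⟩

lemma QSet_star_subset [HasZeroObject D] [Preadditive D] [HasShift D ℤ]
    [∀ n : ℤ, (shiftFunctor D n).Additive] [Pretriangulated D]
    (F : C ⥤ D) [F.CommShift ℤ] [F.IsTriangulated] (X Y : Set C) :
    QSet F (star X Y) ⊆ star (QSet F X) (QSet F Y) := by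
  rintro d ⟨e, ⟨x, y, hx, hy, f, g, h, hT⟩, ⟨i⟩⟩
  exact star_mem_of_iso i ⟨_, _, obj_mem_QSet F hx, obj_mem_QSet F hy, _, _, _,
    F.map_distinguished _ hT⟩

end QSet

variable [IsTriangulated C]

section VerdierQuotient

variable {Z : Set C} (hZ : IsTriangulatedSubcat Z) {P : Set C} (hP : IsTriangulatedSubcat P)
  (hZP : Z ⊆ P)
include hP hZP

lemma exists_distTriang_obj₃_mem {a b : C} (ha : a ∈ P) (hb : b ∈ P)
    (ψ : (Vq hZ).obj a ⟶ (Vq hZ).obj b) :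
    ∃ c ∈ P, ∃ (g : (Vq hZ).obj b ⟶ (Vq hZ).obj c)
      (h : (Vq hZ).obj c ⟶ ((Vq hZ).obj a)⟦(1 : ℤ)⟧),
      Triangle.mk ψ g h ∈ distTriang (VerdierQuotient hZ) := by
  obtain ⟨φ, rfl⟩ := Localization.exists_leftFraction (Vq hZ) hZ.toSubcategory.trW ψ
  obtain ⟨z, u, v, hTz, hz⟩ := φ.hs
  have hb' : φ.Y' ∈ P := hP.ext₂ φ.s u v hTz hb (hZP hz)
  obtain ⟨c, g, h, hTc⟩ := distinguished_cocone_triangle φ.f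
  have : IsIso ((Vq hZ).map φ.s) := Localization.inverts _ _ _ φ.hs
  refine ⟨c, hP.ext₂ g h _ (rot_of_distTriang _ hTc) hb' (hP.shift_mem ha),
    (Vq hZ).map φ.s ≫ (Vq hZ).map g, (Vq hZ).map h ≫ ((Vq hZ).commShiftIso (1 : ℤ)).hom.app a,
    isomorphic_distinguished _ ((Vq hZ).map_distinguished _ hTc) _
      (Triangle.isoMk _ _ (Iso.refl _) (@asIso _ _ _ _ _ this) (Iso.refl _) ?_
        (by dsimp [Triangle.mk, Functor.mapTriangle]; simp)
        (by dsimp [Triangle.mk, Functor.mapTriangle]; simp))⟩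
  dsimp [Triangle.mk, Functor.mapTriangle]
  simp [φ.map_comp_map_s (Vq hZ) (Localization.inverts _ _)]

lemma QSet_mem_obj₃ {T : Triangle (VerdierQuotient hZ)} (hT : T ∈ distTriang _)
    (h₁ : T.obj₁ ∈ QSet (Vq hZ) P) (h₂ : T.obj₂ ∈ QSet (Vq hZ) P) :
    T.obj₃ ∈ QSet (Vq hZ) P := by
  obtain ⟨a, ha, ⟨i⟩⟩ := h₁
  obtain ⟨b, hb, ⟨j⟩⟩ := h₂
  obtain ⟨c, hc, g, h, hT'⟩ :=
    exists_distTriang_obj₃_mem hZ hP hZP ha hb (i.hom ≫ T.mor₁ ≫ j.inv)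
  exact ⟨c, hc, ⟨Triangle.π₃.mapIso (isoTriangleOfIso₁₂ _ _ hT' hT i j
    (by dsimp [Triangle.mk]; simp))⟩⟩

lemma QSet_mem_obj₂ {T : Triangle (VerdierQuotient hZ)} (hT : T ∈ distTriang _)
    (h₁ : T.obj₁ ∈ QSet (Vq hZ) P) (h₃ : T.obj₃ ∈ QSet (Vq hZ) P) :
    T.obj₂ ∈ QSet (Vq hZ) P :=
  QSet_mem_obj₃ hZ hP hZP (inv_rot_of_distTriang _ hT) (QSet_shift_mem _ hP (-1) h₃) h₁

lemma isTriangulatedSubcat_QSet : IsTriangulatedSubcat (QSet (Vq hZ) P) where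
  zero_mem := ⟨0, hP.zero_mem, ⟨(Vq hZ).mapZeroObject⟩⟩
  mem_of_iso := QSet_mem_of_iso _
  shift_mem := QSet_shift_mem _ hP 1
  unshift_mem := QSet_shift_mem _ hP (-1)
  ext₂ _ _ _ hT h₁ h₃ := QSet_mem_obj₂ hZ hP hZP hT h₁ h₃

end VerdierQuotient

section HomVanishing

variable {X Y : Set C} (hX : IsTriangulatedSubcat X) (hY : IsTriangulatedSubcat Y)
  (hXY : IsTriangulatedSubcat (star X Y))
include hXY

lemma exists_trW_inter_comp_eq_zero {x y : C} (hx : x ∈ X) (hy : y ∈ Y) (g : x ⟶ y) :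
    ∃ (y' : C) (t : y ⟶ y'), (hX.inter hY).toSubcategory.trW t ∧ g ≫ t = 0 := by
  obtain ⟨c, u, v, hTc⟩ := distinguished_cocone_triangle g
  obtain ⟨x₁, y₁, hx₁, hy₁, f₁, p, h₁, hT₁⟩ : c ∈ star X Y :=
    hXY.ext₂ u v _ (rot_of_distTriang _ hTc) (subset_star_right hX hy)
      (subset_star_left hY (hX.shift_mem hx))
  obtain ⟨q, g₂, h₂, hTq⟩ := distinguished_cocone_triangle (u ≫ p)
  -- the octahedron on `y ⟶ c ⟶ y₁` exhibits the cone `q` of `u ≫ p` as an extension of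
  -- `x₁⟦1⟧` by `x⟦1⟧`
  have H := someOctahedron rfl (rot_of_distTriang _ hTc) (rot_of_distTriang _ hT₁) hTq
  refine ⟨y₁, u ≫ p, ObjectProperty.trW.mk _ hTq ⟨?_, ?_⟩, ?_⟩
  · exact hX.ext₂ H.m₁ H.m₃ _ H.mem (hX.shift_mem hx) (hX.shift_mem hx₁)
  · exact hY.ext₂ g₂ h₂ _ (rot_of_distTriang _ hTq) hy₁ (hY.shift_mem hy)
  · rw [← Category.assoc, show g ≫ u = 0 from comp_distTriang_mor_zero₁₂ _ hTc, zero_comp]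

lemma map_eq_zero_of_mem {x y : C} (hx : x ∈ X) (hy : y ∈ Y) (g : x ⟶ y) :
    (Vq (hX.inter hY)).map g = 0 := by
  obtain ⟨y', t, ht, hgt⟩ := exists_trW_inter_comp_eq_zero hX hY hXY hx hy g
  have : IsIso ((Vq (hX.inter hY)).map t) := Localization.inverts _ _ _ ht
  rw [← cancel_mono ((Vq (hX.inter hY)).map t), ← Functor.map_comp, hgt, Functor.map_zero,
    zero_comp]

lemma hom_obj_eq_zero {x y : C} (hx : x ∈ X) (hy : y ∈ Y)
    (f : (Vq (hX.inter hY)).obj x ⟶ (Vq (hX.inter hY)).obj y) : f = 0 := by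
  obtain ⟨φ, rfl⟩ := Localization.exists_leftFraction _ (hX.inter hY).toSubcategory.trW f
  obtain ⟨z, u, v, hTz, hz⟩ := φ.hs
  rw [MorphismProperty.LeftFraction.map,
    map_eq_zero_of_mem hX hY hXY hx (hY.ext₂ φ.s u v hTz hy hz.2), zero_comp]

lemma hom_eq_zero_of_mem_QSet {d d' : VerdierQuotient (hX.inter hY)}
    (hd : d ∈ QSet (Vq (hX.inter hY)) X) (hd' : d' ∈ QSet (Vq (hX.inter hY)) Y) (f : d ⟶ d') :
    f = 0 := by
  obtain ⟨x, hx, ⟨i⟩⟩ := hd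
  obtain ⟨y, hy, ⟨j⟩⟩ := hd'
  simpa using hom_obj_eq_zero hX hY hXY hx hy (i.hom ≫ f ≫ j.inv)

end HomVanishing

/-- **Theorem B.** If `X`, `Y` are thick subcategories of `C` and `X * Y` is a triangulated
subcategory, then `(X/(X ∩ Y), Y/(X ∩ Y))` is a stable t-structure in `(X * Y)/(X ∩ Y)`,
where the quotients are realized as the essential images in the Verdier quotient
`C/(X ∩ Y)`. -/
theorem statement1 {X Y : Set C} (hX : IsThickSubcat X) (hY : IsThickSubcat Y)
    (hXY : IsTriangulatedSubcat (star X Y)) :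
    IsStableTStructureIn
      (QSet (Vq (hX.toIsTriangulatedSubcat.inter hY.toIsTriangulatedSubcat)) (star X Y))
      (QSet (Vq (hX.toIsTriangulatedSubcat.inter hY.toIsTriangulatedSubcat)) X)
      (QSet (Vq (hX.toIsTriangulatedSubcat.inter hY.toIsTriangulatedSubcat)) Y) := by
  set hZ := hX.toIsTriangulatedSubcat.inter hY.toIsTriangulatedSubcat
  have hXst : X ⊆ star X Y := subset_star_left hY.toIsTriangulatedSubcat
  have hYst : Y ⊆ star X Y := subset_star_right hX.toIsTriangulatedSubcat
  refine ⟨QSet_mono _ hXst, QSet_mono _ hYst,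
    isTriangulatedSubcat_QSet hZ hX.toIsTriangulatedSubcat Set.inter_subset_left,
    isTriangulatedSubcat_QSet hZ hY.toIsTriangulatedSubcat Set.inter_subset_right,
    hom_eq_zero_of_mem_QSet hX.toIsTriangulatedSubcat hY.toIsTriangulatedSubcat hXY,
    subset_antisymm ?_ (QSet_star_subset _ X Y)⟩
  rintro d ⟨a, b, ha, hb, f, g, h, hT⟩
  exact (isTriangulatedSubcat_QSet hZ hXY fun z hz => hXst hz.1).ext₂ f g h hT
    (QSet_mono _ hXst ha) (QSet_mono _ hYst hb)

end Paper
end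

section
/- Let T be a triangulated category, let (U, V) be a stable t-structure in T, and let X be a thick subcategory of T. Then X * V is a triangulated subcategory of T if and only if (X ∩ U, X ∩ V) is a stable t-structure in X. -/
/-!
If `(X ∩ U, X ∩ V)` is a stable t-structure in `X`, associativity of `*` gives
`X * V = (X ∩ U) * (X ∩ V) * V = (X ∩ U) * V`, and `A * B` is triangulated whenever
`Hom(A, B) = 0`: then every triangle `b ⟶ e ⟶ a ⟶ b⟦1⟧` splits, so `B * A ⊆ A * B` and
`(A * B) * (A * B) ⊆ A * A * B * B = A * B`.
Conversely, if `X * V` is triangulated and `u ⟶ x ⟶ v ⟶ u⟦1⟧` decomposes `x ∈ X`, then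
`u ∈ X * V` admits no nonzero map to `V`, so it is a retract of an object of `X`; hence
`u ∈ X` and then `v ∈ X`.
-/

namespace Paper

open CategoryTheory Limits Triangulated Pretriangulated ZeroObject

universe w v u

variable {C : Type u} [Category.{v} C] [HasZeroObject C] [Preadditive C] [HasShift C ℤ]
  [∀ n : ℤ, (shiftFunctor C n).Additive] [Pretriangulated C]

lemma mem_star_of_distTriang {A B : Set C} (T : Triangle C) (hT : T ∈ distTriang C)
    (h₁ : T.obj₁ ∈ A) (h₃ : T.obj₃ ∈ B) : T.obj₂ ∈ star A B :=
  ⟨T.obj₁, T.obj₃, h₁, h₃, T.mor₁, T.mor₂, T.mor₃, hT⟩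

lemma star_eq_extensionProduct (A B : Set C) :
    star A B = {e | ObjectProperty.extensionProduct (· ∈ A) (· ∈ B) e} := by
  ext e
  constructor
  · rintro ⟨a, b, ha, hb, f, g, h, hT⟩
    exact ⟨a, b, f, g, h, hT, ha, hb⟩
  · rintro ⟨a, b, f, g, h, hT, ha, hb⟩
    exact ⟨a, b, ha, hb, f, g, h, hT⟩

lemma star_mono {A A' B B' : Set C} (hA : A ⊆ A') (hB : B ⊆ B') : star A B ⊆ star A' B' := by
  rintro e ⟨a, b, ha, hb, f, g, h, hT⟩
  exact ⟨a, b, hA ha, hB hb, f, g, h, hT⟩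

lemma mem_star_of_iso {A B : Set C} {e e' : C} (i : e ≅ e') (h : e ∈ star A B) :
    e' ∈ star A B := by
  rw [star_eq_extensionProduct] at h ⊢
  exact (ObjectProperty.extensionProduct _ _).prop_of_iso i h

lemma shift_mem_star {A B : Set C} {e : C} (n : ℤ) (hA : ∀ a ∈ A, a⟦n⟧ ∈ A)
    (hB : ∀ b ∈ B, b⟦n⟧ ∈ B) (h : e ∈ star A B) : e⟦n⟧ ∈ star A B := by
  obtain ⟨a, b, ha, hb, f, g, m, hT⟩ := h
  exact mem_star_of_distTriang _ (Triangle.shift_distinguished _ hT n) (hA a ha) (hB b hb)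

lemma IsTriangulatedSubcat.star_self_subset {A : Set C} (hA : IsTriangulatedSubcat A) :
    star A A ⊆ A := by
  rintro e ⟨a, a', ha, ha', f, g, h, hT⟩
  exact hA.ext₂ f g h hT ha ha'

lemma star_swap_subset {A B : Set C}
    (hAB : ∀ {a b : C}, a ∈ A → b ∈ B → ∀ f : a ⟶ b⟦(1 : ℤ)⟧, f = 0) :
    star B A ⊆ star A B := by
  rintro e ⟨b, a, hb, ha, f, g, h, hT⟩
  obtain ⟨i, -⟩ := exists_iso_binaryBiproduct_of_distTriang _ hT (hAB ha hb h)
  have hab : (a ⊞ b : C) ∈ star A B :=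
    mem_star_of_distTriang _ (binaryBiproductTriangle_distinguished a b) ha hb
  exact mem_star_of_iso ((biprod.braiding a b).trans i.symm) hab

lemma IsThickSubcat.mem_of_mem_star_of_hom_eq_zero {X V : Set C} (hX : IsThickSubcat X) {e : C}
    (he : e ∈ star X V) (hzero : ∀ {v : C}, v ∈ V → ∀ f : e ⟶ v, f = 0) : e ∈ X := by
  obtain ⟨x, v, hx, hv, f, g, h, hT⟩ := he
  obtain ⟨s, hs⟩ := Triangle.coyoneda_exact₂ _ hT (𝟙 e) ((Category.id_comp _).trans (hzero hv g))
  exact hX.mem_of_retract hx ⟨s, f, hs.symm⟩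

lemma IsStableTStructureIn.inter {S U V X : Set C} (hUV : IsStableTStructureIn S U V)
    (hX : IsTriangulatedSubcat X) (h : star (X ∩ U) (X ∩ V) = X) :
    IsStableTStructureIn X (X ∩ U) (X ∩ V) where
  subsetU := Set.inter_subset_left
  subsetV := Set.inter_subset_left
  triU := hX.inter hUV.triU
  triV := hX.inter hUV.triV
  hom_zero hu hv := hUV.hom_zero hu.2 hv.2
  star_eq := h

lemma star_inter_eq_of_isTriangulatedSubcat_star {U V X : Set C}
    (hUV : IsStableTStructureIn Set.univ U V) (hX : IsThickSubcat X)
    (hXV : IsTriangulatedSubcat (star X V)) : star (X ∩ U) (X ∩ V) = X := by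
  refine (star_mono Set.inter_subset_left Set.inter_subset_left).trans
    hX.star_self_subset |>.antisymm fun x hx => ?_
  obtain ⟨u, v, hu, hv, f, g, h, hT⟩ : x ∈ star U V := hUV.star_eq ▸ Set.mem_univ x
  have hxXV : x ∈ star X V :=
    mem_star_of_distTriang _ (contractible_distinguished x) hx hUV.triV.zero_mem
  have hvXV : v ∈ star X V :=
    mem_star_of_distTriang _ (contractible_distinguished₁ v) hX.zero_mem hv
  have huXV : u ∈ star X V :=
    hXV.ext₂ _ _ _ (inv_rot_of_distTriang _ hT) (hXV.unshift_mem hvXV) hxXV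
  have huX : u ∈ X := hX.mem_of_mem_star_of_hom_eq_zero huXV fun hv' => hUV.hom_zero hu hv'
  have hvX : v ∈ X := hX.ext₂ _ _ _ (rot_of_distTriang _ hT) hx (hX.shift_mem huX)
  exact ⟨u, v, ⟨huX, hu⟩, ⟨hvX, hv⟩, f, g, h, hT⟩

variable [IsTriangulated C]

lemma star_assoc (A B D : Set C) : star (star A B) D = star A (star B D) := by
  simp only [star_eq_extensionProduct, Set.mem_ofPred_eq,
    ObjectProperty.extensionProduct_assoc]

lemma isTriangulatedSubcat_star {A B : Set C} (hA : IsTriangulatedSubcat A)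
    (hB : IsTriangulatedSubcat B) (hAB : ∀ {a b : C}, a ∈ A → b ∈ B → ∀ f : a ⟶ b, f = 0) :
    IsTriangulatedSubcat (star A B) where
  zero_mem := mem_star_of_distTriang _ (contractible_distinguished 0) hA.zero_mem hB.zero_mem
  mem_of_iso := mem_star_of_iso
  shift_mem := shift_mem_star 1 (fun _ => hA.shift_mem) (fun _ => hB.shift_mem)
  unshift_mem := shift_mem_star (-1) (fun _ => hA.unshift_mem) (fun _ => hB.unshift_mem)
  ext₂ f g h hT h₁ h₃ := by
    have hswap : star B A ⊆ star A B := star_swap_subset fun ha hb => hAB ha (hB.shift_mem hb)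
    have hstar : star (star A B) (star A B) ⊆ star A B :=
      calc star (star A B) (star A B) = star A (star (star B A) B) := by simp only [star_assoc]
        _ ⊆ star A (star (star A B) B) := star_mono subset_rfl (star_mono hswap subset_rfl)
        _ = star (star A A) (star B B) := by simp only [star_assoc]
        _ ⊆ star A B := star_mono hA.star_self_subset hB.star_self_subset
    exact hstar (mem_star_of_distTriang _ hT h₁ h₃)

lemma star_eq_star_inter_of_star_inter_eq {U V X : Set C} (hV : IsTriangulatedSubcat V)
    (h : star (X ∩ U) (X ∩ V) = X) : star X V = star (X ∩ U) V := by
  refine Set.Subset.antisymm ?_ (star_mono Set.inter_subset_left subset_rfl)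
  calc star X V = star (X ∩ U) (star (X ∩ V) V) := by rw [← star_assoc, h]
    _ ⊆ star (X ∩ U) V :=
      star_mono subset_rfl ((star_mono Set.inter_subset_right subset_rfl).trans
        hV.star_self_subset)

/-- Let `(U, V)` be a stable t-structure in `C` and `X` a thick subcategory.  Then
`X * V` is a triangulated subcategory of `C` if and only if `(X ∩ U, X ∩ V)` is a stable
t-structure in `X`. -/
theorem statement11 {U V X : Set C} (hUV : IsStableTStructureIn Set.univ U V)
    (hX : IsThickSubcat X) :
    IsTriangulatedSubcat (star X V) ↔ IsStableTStructureIn X (X ∩ U) (X ∩ V) := by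
  refine ⟨fun hXV => hUV.inter hX.toIsTriangulatedSubcat
    (star_inter_eq_of_isTriangulatedSubcat_star hUV hX hXV), fun hS => ?_⟩
  rw [star_eq_star_inter_of_star_inter_eq hUV.triV hS.star_eq]
  exact isTriangulatedSubcat_star (hX.inter hUV.triU) hUV.triV fun ha hb => hUV.hom_zero ha.2 hb

end Paper
end

section
/- Let T be a triangulated category, let X be a triangulated subcategory of T, and set F = X * X^⊥, G = (^⊥X) * X, and U = F ∩ G. Then (X, X^⊥ ∩ G) is a stable t-structure in U. -/
/-!
Everything is a computation with extension products `P * Q` (Mathlib's `extensionProduct`),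
which are associative by the octahedral axiom. If `Hom(P, Q) = 0` and `Q` is stable under
shifts, then `Q * P ⊆ P * Q`: a triangle `q → e → p → q⟦1⟧` has zero connecting map, so it
splits. Hence `(P * Q) * (P * Q) = P * ((Q * P) * Q) ⊆ (P * P) * (Q * Q) = P * Q`, i.e. `P * Q`
is triangulated. Applied to `(⊥X, X)` this makes `G = ⊥X * X` a triangulated subcategory
containing `X`. An object `e` of `F ∩ G` sits in a triangle `x → e → t → x⟦1⟧` with `x ∈ X` and
`t ∈ X^⊥`, and `t ∈ G` since `G` is closed under cones; so `F ∩ G = X * (X^⊥ ∩ G)`.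
-/

namespace Paper

open CategoryTheory Limits Triangulated Pretriangulated ZeroObject

universe w v u

variable {C : Type u} [Category.{v} C] [HasZeroObject C] [Preadditive C] [HasShift C ℤ]
  [∀ n : ℤ, (shiftFunctor C n).Additive] [Pretriangulated C]

open ObjectProperty

lemma IsTriangulatedSubcat.isTriangulated {S : Set C} (hS : IsTriangulatedSubcat S) :
    ObjectProperty.IsTriangulated (· ∈ S) where
  exists_zero := ⟨0, isZero_zero C, hS.zero_mem⟩
  isStableUnderShiftBy n := ⟨fun a ha => hS.shift_all a n ha⟩
  ext₂' T hT h₁ h₃ := le_isoClosure _ _ (hS.ext₂ T.mor₁ T.mor₂ T.mor₃ hT h₁ h₃)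

lemma IsTriangulatedSubcat.isClosedUnderIsomorphisms {S : Set C}
    (hS : IsTriangulatedSubcat S) : IsClosedUnderIsomorphisms (· ∈ S) :=
  ⟨hS.mem_of_iso⟩

lemma isTriangulatedSubcat_setOf (P : ObjectProperty C) [P.IsTriangulated]
    [P.IsClosedUnderIsomorphisms] : IsTriangulatedSubcat {x | P x} where
  zero_mem := P.prop_of_isZero (isZero_zero C)
  mem_of_iso e h := P.prop_of_iso e h
  shift_mem h := P.le_shift 1 _ h
  unshift_mem h := P.le_shift (-1) _ h
  ext₂ _ _ _ hT ha hb := P.ext_of_isTriangulatedClosed₂ _ hT ha hb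

lemma star_eq_setOf (A B : Set C) : star A B = {e | extensionProduct (· ∈ A) (· ∈ B) e} := by
  ext e
  constructor
  · rintro ⟨x, y, hx, hy, f, g, h, hT⟩
    exact ⟨x, y, f, g, h, hT, hx, hy⟩
  · rintro ⟨x, y, f, g, h, hT, hx, hy⟩
    exact ⟨x, y, hx, hy, f, g, h, hT⟩

omit [HasZeroObject C] [HasShift C ℤ] [∀ n : ℤ, (shiftFunctor C n).Additive]
  [Pretriangulated C] in
lemma rightPerp_eq_setOf (X : Set C) : rightPerp X = {t | rightOrthogonal (· ∈ X) t} :=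
  Set.ext fun _ => ⟨fun ht _ f hx => ht hx f, fun ht _ hx f => ht f hx⟩

omit [HasZeroObject C] [HasShift C ℤ] [∀ n : ℤ, (shiftFunctor C n).Additive]
  [Pretriangulated C] in
lemma leftPerp_eq_setOf (X : Set C) : leftPerp X = {t | leftOrthogonal (· ∈ X) t} :=
  Set.ext fun _ => ⟨fun ht _ f hx => ht hx f, fun ht _ hx f => ht f hx⟩

lemma extensionProduct_le_extensionProduct_swap {P Q : ObjectProperty C}
    [Q.IsStableUnderShift ℤ] (hPQ : P ≤ Q.leftOrthogonal) :
    extensionProduct Q P ≤ extensionProduct P Q := by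
  rintro e ⟨b, a, _, _, h, hT, hb, ha⟩
  obtain ⟨φ, -, -⟩ :=
    exists_iso_binaryBiproduct_of_distTriang _ hT (hPQ a ha h (Q.le_shift 1 b hb))
  exact prop_of_iso _ (φ ≪≫ biprod.braiding b a).symm
    ⟨a, b, _, _, _, binaryBiproductTriangle_distinguished a b, ha, hb⟩

variable [IsTriangulated C]

lemma extensionProduct_extensionProduct_le {P Q : ObjectProperty C}
    [P.IsTriangulatedClosed₂] [Q.IsTriangulatedClosed₂] [Q.IsStableUnderShift ℤ]
    (hPQ : P ≤ Q.leftOrthogonal) :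
    extensionProduct (extensionProduct P Q) (extensionProduct P Q) ≤ extensionProduct P Q :=
  calc _ = extensionProduct P (extensionProduct (extensionProduct Q P) Q) := by
        rw [extensionProduct_assoc, extensionProduct_assoc Q P Q]
    _ ≤ extensionProduct P (extensionProduct (extensionProduct P Q) Q) :=
        monotone_extensionProduct_right _ (monotone_extensionProduct_left _
          (extensionProduct_le_extensionProduct_swap hPQ))
    _ = extensionProduct (extensionProduct P P) (extensionProduct Q Q) := by
        rw [extensionProduct_assoc P P, extensionProduct_assoc P Q Q]
    _ ≤ extensionProduct P.isoClosure Q.isoClosure :=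
        (monotone_extensionProduct_left _
          (extensionProduct_le_of_isTriangulatedClosed₂' le_rfl le_rfl)).trans
        (monotone_extensionProduct_right _
          (extensionProduct_le_of_isTriangulatedClosed₂' le_rfl le_rfl))
    _ = extensionProduct P Q := by
        rw [extensionProduct_isoClosure_left, extensionProduct_isoClosure_right]

lemma isTriangulated_extensionProduct {P Q : ObjectProperty C} [P.IsTriangulated]
    [Q.IsTriangulated] (hPQ : P ≤ Q.leftOrthogonal) :
    (extensionProduct P Q).IsTriangulated where
  exists_zero :=
    let ⟨Z, hZ, hP⟩ := P.exists_prop_of_containsZero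
    ⟨Z, hZ, le_extensionProduct_left Q Z hP⟩
  ext₂' _ hT h₁ h₃ :=
    le_isoClosure _ _ (extensionProduct_extensionProduct_le hPQ _ ⟨_, _, _, _, _, hT, h₁, h₃⟩)

theorem isStableTStructureIn_extensionProduct (P : ObjectProperty C) [P.IsTriangulated]
    [P.IsClosedUnderIsomorphisms] :
    IsStableTStructureIn
      {e | extensionProduct P P.rightOrthogonal e ∧ extensionProduct P.leftOrthogonal P e}
      {x | P x} {t | P.rightOrthogonal t ∧ extensionProduct P.leftOrthogonal P t} := by
  set G := extensionProduct P.leftOrthogonal P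
  have : G.IsTriangulated := isTriangulated_extensionProduct le_rfl
  have hPG : P ≤ G := le_extensionProduct_right _
  refine ⟨fun x hx => ⟨le_extensionProduct_left _ x hx, hPG x hx⟩,
    fun t ht => ⟨le_extensionProduct_right P t ht.1, ht.2⟩, isTriangulatedSubcat_setOf P,
    isTriangulatedSubcat_setOf (P.rightOrthogonal ⊓ G), fun hu hv f => hv.1 f hu, ?_⟩
  rw [star_eq_setOf]
  ext e
  constructor
  · rintro ⟨x, t, f, g, h, hT, hx, ht, htG⟩
    exact ⟨⟨x, t, f, g, h, hT, hx, ht⟩, G.ext_of_isTriangulatedClosed₂ _ hT (hPG x hx) htG⟩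
  · rintro ⟨⟨x, t, f, g, h, hT, hx, ht⟩, heG⟩
    exact ⟨x, t, f, g, h, hT, hx, ht, G.ext_of_isTriangulatedClosed₃ _ hT (hPG x hx) heG⟩

/-- Let `X` be a triangulated subcategory of `C` and set `F = X * X^⊥`, `G = (^⊥X) * X`
and `U = F ∩ G`.  Then `(X, X^⊥ ∩ G)` is a stable t-structure in `U`. -/
theorem statement16 {X : Set C} (hX : IsTriangulatedSubcat X) :
    IsStableTStructureIn (star X (rightPerp X) ∩ star (leftPerp X) X)
      X (rightPerp X ∩ star (leftPerp X) X) := by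
  have := hX.isTriangulated
  have := hX.isClosedUnderIsomorphisms
  simpa only [star_eq_setOf, rightPerp_eq_setOf, leftPerp_eq_setOf, Set.mem_ofPred_eq,
    Set.ofPred_mem_eq, Set.ofPred_and] using isStableTStructureIn_extensionProduct (· ∈ X)

end Paper
end
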